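/- arXiv:2104.11058 — 2 statements merged into one kernel-verified Lean document; each statement's English description precedes it below -/
import Mathlib

section
/- Let (𝔣, 𝔱, k) be a unit-speed space-form curve frame on an open interval I with data (𝔭, 𝔮, χ, κ). Then 𝔣″ = −κ·𝔣 + χ·k·𝔱 + 𝔮 − k·𝔭 on I. -/
noncomputable section

/-- `V = ℝ⁵`. -/
abbrev V : Type := Fin 5 → ℝ

/-- The symmetric bilinear form of signature (3,2) on `V`. -/
def bB (x y : V) : ℝ := x 0 * y 0 + x 1 * y 1 + x 2 * y 2 - x 3 * y 3 - x 4 * y 4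

/-- The skew-symmetric endomorphism `a ∧ b` of `V`. -/
def wedge (a b : V) : V →L[ℝ] V :=
  LinearMap.toContinuousLinearMap
    { toFun := fun x => bB a x • b - bB b x • a
      map_add' := by
        intro x y
        have h1 : bB a (x + y) = bB a x + bB a y := by simp [bB]; ring
        have h2 : bB b (x + y) = bB b x + bB b y := by simp [bB]; ring
        try dsimp only
        rw [h1, h2]; module
      map_smul' := by
        intro c x
        have h1 : bB a (c • x) = c * bB a x := by simp [bB]; ring
        have h2 : bB b (c • x) = c * bB b x := by simp [bB]; ring
        try dsimp only
        rw [h1, h2]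
        simp only [RingHom.id_apply]
        module }

/-- Membership in `C(t) = span{σ₁(t), σ₂(t)}`. -/
def memC (σ₁ σ₂ : ℝ → V) (t : ℝ) (x : V) : Prop :=
  ∃ a b : ℝ, x = a • σ₁ t + b • σ₂ t

/-- A Legendre curve frame on an open interval `I`. -/
structure LegendreCurveFrame (I : Set ℝ) (σ₁ σ₂ : ℝ → V) : Prop where
  isOpen : IsOpen I
  ordConn : I.OrdConnected
  smooth₁ : ContDiffOn ℝ (⊤ : ℕ∞) σ₁ I
  smooth₂ : ContDiffOn ℝ (⊤ : ℕ∞) σ₂ I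
  indep : ∀ t ∈ I, ∀ a b : ℝ, a • σ₁ t + b • σ₂ t = 0 → a = 0 ∧ b = 0
  iso₁₁ : ∀ t ∈ I, bB (σ₁ t) (σ₁ t) = 0
  iso₁₂ : ∀ t ∈ I, bB (σ₁ t) (σ₂ t) = 0
  iso₂₂ : ∀ t ∈ I, bB (σ₂ t) (σ₂ t) = 0
  d₁₁ : ∀ t ∈ I, bB (deriv σ₁ t) (σ₁ t) = 0
  d₁₂ : ∀ t ∈ I, bB (deriv σ₁ t) (σ₂ t) = 0
  d₂₁ : ∀ t ∈ I, bB (deriv σ₂ t) (σ₁ t) = 0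
  d₂₂ : ∀ t ∈ I, bB (deriv σ₂ t) (σ₂ t) = 0
  rank3 : ∀ t ∈ I,
    Module.finrank ℝ
      ↥(Submodule.span ℝ ({σ₁ t, σ₂ t, deriv σ₁ t, deriv σ₂ t} : Set V)) = 3

/-- The curve `C` is circular. -/
def Circular (I : Set ℝ) (σ₁ σ₂ : ℝ → V) : Prop :=
  ∃ v : V, v ≠ 0 ∧ ∀ t ∈ I, memC σ₁ σ₂ t v

/-- `ξ(t)` is a sum of endomorphisms `a ∧ b` with `a ∈ C(t)` and `b ∈ C(t)^⊥`. -/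
def PolarForm (I : Set ℝ) (σ₁ σ₂ : ℝ → V) (ξ : ℝ → V →L[ℝ] V) : Prop :=
  ∀ t ∈ I, ∃ b₁ b₂ : V,
    bB b₁ (σ₁ t) = 0 ∧ bB b₁ (σ₂ t) = 0 ∧ bB b₂ (σ₁ t) = 0 ∧ bB b₂ (σ₂ t) = 0 ∧
    ξ t = wedge (σ₁ t) b₁ + wedge (σ₂ t) b₂

/-- `Q` represents the quadratic differential of `ξ`. -/
def IsQuadDiff (I : Set ℝ) (σ₁ σ₂ : ℝ → V) (ξ : ℝ → V →L[ℝ] V) (Q : ℝ → ℝ) : Prop :=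
  ∀ t ∈ I, ∃ a b c d : ℝ,
    ξ t (deriv σ₁ t) = a • σ₁ t + b • σ₂ t ∧
    ξ t (deriv σ₂ t) = c • σ₁ t + d • σ₂ t ∧
    Q t = a + d

/-- `ξ` is a polarisation of the curve `C`. -/
def IsPolarisation (I : Set ℝ) (σ₁ σ₂ : ℝ → V) (ξ : ℝ → V →L[ℝ] V) : Prop :=
  ContDiffOn ℝ (⊤ : ℕ∞) ξ I ∧ PolarForm I σ₁ σ₂ ξ ∧
  ∃ Q : ℝ → ℝ, IsQuadDiff I σ₁ σ₂ ξ Q ∧ ∃ t ∈ I, Q t ≠ 0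

/-- `(p₀, p₁)` is a linear conserved quantity of `d + tξ`. -/
def IsLCQ (I : Set ℝ) (σ₁ σ₂ : ℝ → V) (ξ : ℝ → V →L[ℝ] V) (p₀ : V) (p₁ : ℝ → V) : Prop :=
  ContDiffOn ℝ (⊤ : ℕ∞) p₁ I ∧
  (∀ t ∈ I, memC σ₁ σ₂ t (p₁ t)) ∧
  ∀ t ∈ I, deriv p₁ t + ξ t p₀ = 0


/-- A unit-speed space-form curve frame with data `(p, q, χ, κ)`:
`f` is the light-cone lift of a unit-speed curve of geodesic curvature `k` in the
2-dimensional space form of constant curvature `κ`, and `tf` its tangent congruence. -/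
structure SpaceFormFrame (I : Set ℝ) (p q : V) (χ κ : ℝ)
    (f tf : ℝ → V) (k : ℝ → ℝ) : Prop where
  isOpen : IsOpen I
  ordConn : I.OrdConnected
  hχ : χ = 1 ∨ χ = -1
  hq0 : q ≠ 0
  hpp : bB p p = -χ
  hqq : bB q q = -κ
  hpq : bB p q = 0
  smoothf : ContDiffOn ℝ (⊤ : ℕ∞) f I
  smootht : ContDiffOn ℝ (⊤ : ℕ∞) tf I
  smoothk : ContDiffOn ℝ (⊤ : ℕ∞) k I
  hff : ∀ s ∈ I, bB (f s) (f s) = 0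
  htt : ∀ s ∈ I, bB (tf s) (tf s) = 0
  hft : ∀ s ∈ I, bB (f s) (tf s) = 0
  hfq : ∀ s ∈ I, bB (f s) q = -1
  hfp : ∀ s ∈ I, bB (f s) p = 0
  htp : ∀ s ∈ I, bB (tf s) p = -1
  htq : ∀ s ∈ I, bB (tf s) q = 0
  hunit : ∀ s ∈ I, bB (deriv f s) (deriv f s) = 1
  htang : ∀ s ∈ I, deriv tf s = -(k s) • deriv f s


/-- Auxiliary: symmetry of `bB`. -/
lemma bB_symm (x y : V) : bB x y = bB y x := by unfold bB; ring

lemma bB_zero_right (x : V) : bB x 0 = 0 := by unfold bB; simp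

lemma bB_smul_right (a : ℝ) (x y : V) : bB x (a • y) = a * bB x y := by
  unfold bB; simp only [Pi.smul_apply, smul_eq_mul]; ring

lemma bB_sub (x y w : V) : bB x (y - w) = bB x y - bB x w := by
  unfold bB; simp only [Pi.sub_apply]; ring

lemma bB_comb (x u w r pp : V) (a b c : ℝ) :
    bB x (a • u + b • w + r - c • pp) =
      a * bB x u + b * bB x w + bB x r - c * bB x pp := by
  unfold bB
  simp only [Pi.add_apply, Pi.sub_apply, Pi.smul_apply, smul_eq_mul]
  ring

lemma hasDerivAt_bB {f g : ℝ → V} {f' g' : V} {s : ℝ}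
    (hf : HasDerivAt f f' s) (hg : HasDerivAt g g' s) :
    HasDerivAt (fun t => bB (f t) (g t)) (bB f' (g s) + bB (f s) g') s := by
  have hfi : ∀ i, HasDerivAt (fun t => f t i) (f' i) s := hasDerivAt_pi.mp hf
  have hgi : ∀ i, HasDerivAt (fun t => g t i) (g' i) s := hasDerivAt_pi.mp hg
  have H := (((((hfi 0).mul (hgi 0)).add ((hfi 1).mul (hgi 1))).add
      ((hfi 2).mul (hgi 2))).sub ((hfi 3).mul (hgi 3))).sub ((hfi 4).mul (hgi 4))
  exact H.congr_deriv (by unfold bB; ring)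

lemma perp_zero (c d : ℝ) (v : Fin 5 → V) (z : V)
    (hz : ∀ i, bB (v i) z = 0)
    (hG : ∀ i j, bB (v i) (v j) =
      !![0,0,0,-1,0; 0,0,-1,0,0; 0,-1,c,0,0; -1,0,0,d,0; (0:ℝ),0,0,0,1] i j) :
    z = 0 := by
  classical
  set N : Matrix (Fin 5) (Fin 5) ℝ :=
    Matrix.of (fun i => ![v i 0, v i 1, v i 2, -(v i 3), -(v i 4)]) with hN
  set M : Matrix (Fin 5) (Fin 5) ℝ := Matrix.of (fun i j => v i j) with hM
  have hNz : N.mulVec z = 0 := by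
    funext i
    have := hz i
    simp [hN, Matrix.mulVec, dotProduct, Fin.sum_univ_five, bB] at this ⊢
    linarith
  have hNM : N * M.transpose =
      !![0,0,0,-1,0; 0,0,-1,0,0; 0,-1,c,0,0; -1,0,0,d,0; (0:ℝ),0,0,0,1] := by
    ext i j
    rw [← hG i j]
    simp [hN, hM, Matrix.mul_apply, Fin.sum_univ_five, bB]
    ring
  have hdet : N.det * M.transpose.det = 1 := by
    rw [← Matrix.det_mul, hNM]
    simp [Matrix.det_succ_row_zero, Fin.sum_univ_succ]; simp [Fin.succAbove]; norm_num
  have hU : IsUnit N.det := IsUnit.of_mul_eq_one _ hdet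
  have hinv : N⁻¹.mulVec (N.mulVec z) = z := by
    rw [Matrix.mulVec_mulVec, Matrix.nonsing_inv_mul _ hU, Matrix.one_mulVec]
  rw [hNz] at hinv
  simpa using hinv.symm

/-- `𝔣″ = −κ·𝔣 + χ·k·𝔱 + 𝔮 − k·𝔭`. -/
theorem stmt8 (I : Set ℝ) (p q : V) (χ κ : ℝ) (f tf : ℝ → V) (k : ℝ → ℝ)
    (h : SpaceFormFrame I p q χ κ f tf k) :
    ∀ s ∈ I, deriv (deriv f) s = (-κ) • f s + (χ * k s) • tf s + q - (k s) • p := by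
  intro s hs
  have hI := h.isOpen
  have hdf : ∀ t ∈ I, HasDerivAt f (deriv f t) t := fun t ht =>
    ((h.smoothf.differentiableOn (by simp)).differentiableAt (hI.mem_nhds ht)).hasDerivAt
  have hdtf : ∀ t ∈ I, HasDerivAt tf (deriv tf t) t := fun t ht =>
    ((h.smootht.differentiableOn (by simp)).differentiableAt (hI.mem_nhds ht)).hasDerivAt
  have hcd : ContDiffOn ℝ (⊤ : ℕ∞) (deriv f) I := h.smoothf.deriv_of_isOpen hI (by exact_mod_cast le_top)
  have hddf : ∀ t ∈ I, HasDerivAt (deriv f) (deriv (deriv f) t) t := fun t ht =>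
    ((hcd.differentiableOn (by simp)).differentiableAt (hI.mem_nhds ht)).hasDerivAt
  have key : ∀ t ∈ I, ∀ (u : ℝ → ℝ) (c du : ℝ),
      HasDerivAt u du t → (∀ r ∈ I, u r = c) → du = 0 := by
    intro t ht u c du hu hc
    have h0 : HasDerivAt u 0 t :=
      (hasDerivAt_const t c).congr_of_eventuallyEq
        (Filter.eventuallyEq_of_mem (hI.mem_nhds ht) hc)
    exact hu.unique h0
  -- first-order identities on all of I
  have hF'F : ∀ t ∈ I, bB (deriv f t) (f t) = 0 := by
    intro t ht
    have h0 := key t ht _ 0 _ (hasDerivAt_bB (hdf t ht) (hdf t ht)) h.hff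
    have hsym := bB_symm (f t) (deriv f t)
    linarith
  have hF'p : ∀ t ∈ I, bB (deriv f t) p = 0 := by
    intro t ht
    have h0 := key t ht _ 0 _ (hasDerivAt_bB (hdf t ht) (hasDerivAt_const t p)) h.hfp
    simpa [bB_zero_right] using h0
  have hF'q : ∀ t ∈ I, bB (deriv f t) q = 0 := by
    intro t ht
    have h0 := key t ht _ (-1) _ (hasDerivAt_bB (hdf t ht) (hasDerivAt_const t q)) h.hfq
    simpa [bB_zero_right] using h0
  have hF'T : ∀ t ∈ I, bB (deriv f t) (tf t) = 0 := by
    intro t ht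
    have h0 := key t ht _ 0 _ (hasDerivAt_bB (hdf t ht) (hdtf t ht)) h.hft
    rw [h.htang t ht, bB_smul_right] at h0
    have h1 : bB (f t) (deriv f t) = 0 := by rw [bB_symm]; exact hF'F t ht
    rw [h1] at h0
    linarith
  -- second-order identities at s
  have hF''F : bB (deriv (deriv f) s) (f s) = -1 := by
    have h0 := key s hs _ 0 _ (hasDerivAt_bB (hddf s hs) (hdf s hs)) hF'F
    have := h.hunit s hs
    linarith
  have hF''T : bB (deriv (deriv f) s) (tf s) = k s := by
    have h0 := key s hs _ 0 _ (hasDerivAt_bB (hddf s hs) (hdtf s hs)) hF'T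
    rw [h.htang s hs, bB_smul_right, h.hunit s hs] at h0
    linarith
  have hF''p : bB (deriv (deriv f) s) p = 0 := by
    have h0 := key s hs _ 0 _ (hasDerivAt_bB (hddf s hs) (hasDerivAt_const s p)) hF'p
    simpa [bB_zero_right] using h0
  have hF''q : bB (deriv (deriv f) s) q = 0 := by
    have h0 := key s hs _ 0 _ (hasDerivAt_bB (hddf s hs) (hasDerivAt_const s q)) hF'q
    simpa [bB_zero_right] using h0
  have hF''F' : bB (deriv (deriv f) s) (deriv f s) = 0 := by
    have h0 := key s hs _ 1 _ (hasDerivAt_bB (hddf s hs) (hddf s hs)) h.hunit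
    have hsym := bB_symm (deriv f s) (deriv (deriv f) s)
    linarith
  -- symmetric versions of the frame identities at s
  have hTF : bB (tf s) (f s) = 0 := by rw [bB_symm]; exact h.hft s hs
  have hpF : bB p (f s) = 0 := by rw [bB_symm]; exact h.hfp s hs
  have hqF : bB q (f s) = -1 := by rw [bB_symm]; exact h.hfq s hs
  have hpT : bB p (tf s) = -1 := by rw [bB_symm]; exact h.htp s hs
  have hqT : bB q (tf s) = 0 := by rw [bB_symm]; exact h.htq s hs
  have hqp : bB q p = 0 := by rw [bB_symm]; exact h.hpq
  have hFF' : bB (f s) (deriv f s) = 0 := by rw [bB_symm]; exact hF'F s hs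
  have hTF' : bB (tf s) (deriv f s) = 0 := by rw [bB_symm]; exact hF'T s hs
  have hpF' : bB p (deriv f s) = 0 := by rw [bB_symm]; exact hF'p s hs
  have hqF' : bB q (deriv f s) = 0 := by rw [bB_symm]; exact hF'q s hs
  have hFF'' : bB (f s) (deriv (deriv f) s) = -1 := by rw [bB_symm]; exact hF''F
  have hTF'' : bB (tf s) (deriv (deriv f) s) = k s := by rw [bB_symm]; exact hF''T
  have hpF'' : bB p (deriv (deriv f) s) = 0 := by rw [bB_symm]; exact hF''p
  have hqF'' : bB q (deriv (deriv f) s) = 0 := by rw [bB_symm]; exact hF''q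
  have hF'F'' : bB (deriv f s) (deriv (deriv f) s) = 0 := by rw [bB_symm]; exact hF''F'
  have expand : ∀ x : V,
      bB x (deriv (deriv f) s - ((-κ) • f s + (χ * k s) • tf s + q - (k s) • p)) =
        bB x (deriv (deriv f) s) -
          ((-κ) * bB x (f s) + (χ * k s) * bB x (tf s) + bB x q - (k s) * bB x p) := by
    intro x; rw [bB_sub, bB_comb]
  have hmain : deriv (deriv f) s - ((-κ) • f s + (χ * k s) • tf s + q - (k s) • p) = 0 := by
    apply perp_zero (-χ) (-κ) ![f s, tf s, p, q, deriv f s]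
    · intro i
      fin_cases i
      · show bB (f s) _ = 0
        rw [expand, hFF'', h.hff s hs, h.hft s hs, h.hfq s hs, h.hfp s hs]; ring
      · show bB (tf s) _ = 0
        rw [expand, hTF'', hTF, h.htt s hs, h.htq s hs, h.htp s hs]; ring
      · show bB p _ = 0
        rw [expand, hpF'', hpF, hpT, h.hpq, h.hpp]; ring
      · show bB q _ = 0
        rw [expand, hqF'', hqF, hqT, h.hqq, hqp]; ring
      · show bB (deriv f s) _ = 0
        rw [expand, hF'F'', hF'F s hs, hF'T s hs, hF'q s hs, hF'p s hs]; ring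
    · intro i j
      fin_cases i <;> fin_cases j <;>
        simp [hFF'', hTF'', hpF'', hqF'', hF'F'',
          h.hff s hs, h.hft s hs, h.hfq s hs, h.hfp s hs,
          h.htt s hs, h.htq s hs, h.htp s hs, hTF,
          h.hpp, h.hpq, hpF, hpT, h.hqq, hqp, hqF, hqT,
          hFF', hTF', hpF', hqF', h.hunit s hs, hF'F s hs, hF'T s hs,
          hF'p s hs, hF'q s hs, Matrix.vecHead, Matrix.vecTail]
  exact sub_eq_zero.mp hmain
end
end

section
/- Let σ₁, σ₂ : U → V be a Legendre surface frame and suppose l : U → V is smooth with B(l, l) = 1, B(l, σ₁) = B(l, σ₂) = 0 and ∂l/∂u = 0 on U. Then: (i) at every point of U the span of σ₁, σ₂, ∂σ₁/∂u, ∂σ₂/∂u is exactly 3-dimensional (the u-coordinate lines are curvature lines of the underlying surface); and (ii) for every 𝔭 ∈ V with B(𝔭, 𝔭) = −1 there exists a smooth, nowhere-vanishing map ν : U → V with B(ν, ν) = 0, ∂ν/∂u = 0 and ν(x) ∈ span{l(x), 𝔭} for all x ∈ U, such that B(ν(x), w) = 0 for every x ∈ U and every w ∈ C(x) with B(w, 𝔭)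 = 0. (That is, the point sphere map of the surface with respect to any point sphere complex 𝔭 lies on a sphere congruence ν that is constant along the u-lines, so the u-curvature lines are spherical.) -/
noncomputable section

/-- `V6 = ℝ⁶`. -/
abbrev V6 : Type := Fin 6 → ℝ

/-- The symmetric bilinear form of signature (4,2) on `V6`. -/
def bB6 (x y : V6) : ℝ :=
  x 0 * y 0 + x 1 * y 1 + x 2 * y 2 + x 3 * y 3 - x 4 * y 4 - x 5 * y 5

/-- The skew-symmetric endomorphism `a ∧ b` of `V6`. -/
def wedge6 (a b : V6) : V6 →L[ℝ] V6 :=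
  LinearMap.toContinuousLinearMap
    { toFun := fun x => bB6 a x • b - bB6 b x • a
      map_add' := by
        intro x y
        have h1 : bB6 a (x + y) = bB6 a x + bB6 a y := by simp [bB6]; ring
        have h2 : bB6 b (x + y) = bB6 b x + bB6 b y := by simp [bB6]; ring
        try dsimp only
        rw [h1, h2]; module
      map_smul' := by
        intro c x
        have h1 : bB6 a (c • x) = c * bB6 a x := by simp [bB6]; ring
        have h2 : bB6 b (c • x) = c * bB6 b x := by simp [bB6]; ring
        try dsimp only
        rw [h1, h2]
        simp only [RingHom.id_apply]
        module }

/-- The partial derivative in the `u`-direction. -/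
def pu (σ : ℝ × ℝ → V6) (x : ℝ × ℝ) : V6 := fderiv ℝ σ x (1, 0)

/-- The partial derivative in the `v`-direction. -/
def pv (σ : ℝ × ℝ → V6) (x : ℝ × ℝ) : V6 := fderiv ℝ σ x (0, 1)

/-- A Legendre surface frame on an open connected set `U ⊆ ℝ²`: the contact lift of a
surface in Lie sphere geometry. -/
structure LegendreSurfaceFrame (U : Set (ℝ × ℝ)) (σ₁ σ₂ : ℝ × ℝ → V6) : Prop where
  isOpen : IsOpen U
  conn : IsConnected U
  smooth₁ : ContDiffOn ℝ (⊤ : ℕ∞) σ₁ U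
  smooth₂ : ContDiffOn ℝ (⊤ : ℕ∞) σ₂ U
  indep : ∀ x ∈ U, ∀ a b : ℝ, a • σ₁ x + b • σ₂ x = 0 → a = 0 ∧ b = 0
  iso₁₁ : ∀ x ∈ U, bB6 (σ₁ x) (σ₁ x) = 0
  iso₁₂ : ∀ x ∈ U, bB6 (σ₁ x) (σ₂ x) = 0
  iso₂₂ : ∀ x ∈ U, bB6 (σ₂ x) (σ₂ x) = 0
  du₁₁ : ∀ x ∈ U, bB6 (pu σ₁ x) (σ₁ x) = 0
  du₁₂ : ∀ x ∈ U, bB6 (pu σ₁ x) (σ₂ x) = 0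
  du₂₁ : ∀ x ∈ U, bB6 (pu σ₂ x) (σ₁ x) = 0
  du₂₂ : ∀ x ∈ U, bB6 (pu σ₂ x) (σ₂ x) = 0
  dv₁₁ : ∀ x ∈ U, bB6 (pv σ₁ x) (σ₁ x) = 0
  dv₁₂ : ∀ x ∈ U, bB6 (pv σ₁ x) (σ₂ x) = 0
  dv₂₁ : ∀ x ∈ U, bB6 (pv σ₂ x) (σ₁ x) = 0
  dv₂₂ : ∀ x ∈ U, bB6 (pv σ₂ x) (σ₂ x) = 0
  legendre : ∀ x ∈ U, ∀ X : ℝ × ℝ, X ≠ 0 →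
    ¬((∃ a b : ℝ, fderiv ℝ σ₁ x X = a • σ₁ x + b • σ₂ x) ∧
      (∃ a b : ℝ, fderiv ℝ σ₂ x X = a • σ₁ x + b • σ₂ x))


lemma bB6_comm (a b : V6) : bB6 a b = bB6 b a := by simp only [bB6]; ring

lemma bB6_add_right (a x y : V6) : bB6 a (x + y) = bB6 a x + bB6 a y := by
  simp only [bB6, Pi.add_apply]; ring

lemma bB6_smul_right (a : V6) (r : ℝ) (x : V6) : bB6 a (r • x) = r * bB6 a x := by
  simp only [bB6, Pi.smul_apply, smul_eq_mul]; ring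

@[simp] lemma bB6_zero_right (a : V6) : bB6 a 0 = 0 := by simp [bB6]

@[simp] lemma bB6_zero_left (a : V6) : bB6 0 a = 0 := by simp [bB6]

def bR (a : V6) : V6 →L[ℝ] ℝ :=
  LinearMap.toContinuousLinearMap
    { toFun := fun x => bB6 a x
      map_add' := fun x y => bB6_add_right a x y
      map_smul' := fun r x => by simpa using bB6_smul_right a r x }

@[simp] lemma bR_apply (a x : V6) : bR a x = bB6 a x := rfl


lemma hasFDerivAt_bB6 {f g : ℝ × ℝ → V6} {F G : (ℝ × ℝ) →L[ℝ] V6} {x : ℝ × ℝ}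
    (hf : HasFDerivAt f F x) (hg : HasFDerivAt g G x) :
    HasFDerivAt (fun y => bB6 (f y) (g y)) ((bR (g x)).comp F + (bR (f x)).comp G) x := by
  have hfi : ∀ i : Fin 6, HasFDerivAt (fun y => f y i)
      ((ContinuousLinearMap.proj i).comp F) x :=
    fun i => by
      have := (ContinuousLinearMap.proj (R := ℝ) (φ := fun _ : Fin 6 => ℝ) i).hasFDerivAt.comp x hf
      exact this
  have hgi : ∀ i : Fin 6, HasFDerivAt (fun y => g y i)
      ((ContinuousLinearMap.proj i).comp G) x :=
    fun i => by
      have := (ContinuousLinearMap.proj (R := ℝ) (φ := fun _ : Fin 6 => ℝ) i).hasFDerivAt.comp x hg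
      exact this
  have H := (((((hfi 0).mul (hgi 0)).add ((hfi 1).mul (hgi 1))).add
      ((hfi 2).mul (hgi 2))).add ((hfi 3).mul (hgi 3))).sub ((hfi 4).mul (hgi 4))
  have H2 := H.sub ((hfi 5).mul (hgi 5))
  refine H2.congr_fderiv (ContinuousLinearMap.ext fun X => ?_)
  simp [ContinuousLinearMap.comp_apply, bB6]
  ring

lemma fderiv_bB6_pu {f g : ℝ × ℝ → V6} {x : ℝ × ℝ}
    (hf : DifferentiableAt ℝ f x) (hg : DifferentiableAt ℝ g x) :
    fderiv ℝ (fun y => bB6 (f y) (g y)) x (1, 0)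
      = bB6 (pu f x) (g x) + bB6 (f x) (pu g x) := by
  have H := hasFDerivAt_bB6 hf.hasFDerivAt hg.hasFDerivAt
  rw [H.fderiv]
  simp only [ContinuousLinearMap.add_apply, ContinuousLinearMap.comp_apply, bR_apply]
  rw [bB6_comm (g x)]
  rfl

lemma fderiv_zero_of_eqOn {U : Set (ℝ × ℝ)} (hU : IsOpen U) {x : ℝ × ℝ} (hx : x ∈ U)
    {φ : ℝ × ℝ → ℝ} (h0 : ∀ y ∈ U, φ y = 0) : fderiv ℝ φ x = 0 := by
  have : φ =ᶠ[nhds x] (fun _ => (0 : ℝ)) :=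
    Filter.eventuallyEq_of_mem (hU.mem_nhds hx) h0
  rw [this.fderiv_eq]
  exact fderiv_const_apply 0

lemma bB6_add_left (x y a : V6) : bB6 (x + y) a = bB6 x a + bB6 y a := by
  simp only [bB6, Pi.add_apply]; ring

lemma bB6_smul_left (r : ℝ) (x a : V6) : bB6 (r • x) a = r * bB6 x a := by
  simp only [bB6, Pi.smul_apply, smul_eq_mul]; ring


lemma sum_sq_eq_zero {m : V6}
    (hm : m 0 * m 0 + m 1 * m 1 + m 2 * m 2 + m 3 * m 3 + m 4 * m 4 + m 5 * m 5 = 0) :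
    m = 0 := by
  have h0 := mul_self_nonneg (m 0)
  have h1 := mul_self_nonneg (m 1)
  have h2 := mul_self_nonneg (m 2)
  have h3 := mul_self_nonneg (m 3)
  have h4 := mul_self_nonneg (m 4)
  have h5 := mul_self_nonneg (m 5)
  have e : ∀ j : Fin 6, m j * m j = 0 → m j = 0 := fun j hj => mul_self_eq_zero.mp hj
  funext i
  fin_cases i
  · exact e 0 (by linarith)
  · exact e 1 (by linarith)
  · exact e 2 (by linarith)
  · exact e 3 (by linarith)
  · exact e 4 (by linarith)
  · exact e 5 (by linarith)

/-- the sign-flip vector -/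
def qflip (a : V6) : V6 := fun i => if (i : ℕ) < 4 then a i else -a i

@[simp] lemma qflip0 (a : V6) : qflip a 0 = a 0 := rfl
@[simp] lemma qflip1 (a : V6) : qflip a 1 = a 1 := rfl
@[simp] lemma qflip2 (a : V6) : qflip a 2 = a 2 := rfl
@[simp] lemma qflip3 (a : V6) : qflip a 3 = a 3 := rfl
@[simp] lemma qflip4 (a : V6) : qflip a 4 = -a 4 := rfl
@[simp] lemma qflip5 (a : V6) : qflip a 5 = -a 5 := rfl

lemma bB6_qflip_self (m : V6) :
    bB6 m (qflip m) = m 0 * m 0 + m 1 * m 1 + m 2 * m 2 + m 3 * m 3 + m 4 * m 4 + m 5 * m 5 := by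
  simp only [bB6, qflip0, qflip1, qflip2, qflip3, qflip4, qflip5]
  ring

lemma qflip_comb (c0 c1 c2 : ℝ) (s₁ s₂ L : V6) :
    c0 • qflip s₁ + c1 • qflip s₂ + c2 • qflip L = qflip (c0 • s₁ + c1 • s₂ + c2 • L) := by
  funext i
  by_cases hi : (i : ℕ) < 4 <;>
    simp [qflip, hi, Pi.add_apply, Pi.smul_apply, smul_eq_mul] <;> ring

lemma finrank_ker_three (s₁ s₂ L : V6)
    (h1L : bB6 L s₁ = 0) (h2L : bB6 L s₂ = 0) (hLL : bB6 L L = 1)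
    (hind : ∀ a b : ℝ, a • s₁ + b • s₂ = 0 → a = 0 ∧ b = 0) :
    ∃ K : Submodule ℝ V6, Module.finrank ℝ K = 3 ∧
      ∀ v : V6, bB6 s₁ v = 0 → bB6 s₂ v = 0 → bB6 L v = 0 → v ∈ K := by
  classical
  set sv : Fin 3 → V6 := ![s₁, s₂, L] with hsv
  set Φ : V6 →ₗ[ℝ] (Fin 3 → ℝ) :=
    { toFun := fun v => fun i => bB6 (sv i) v
      map_add' := fun v w => by funext i; exact bB6_add_right _ v w
      map_smul' := fun r v => by
        funext i
        simp only [RingHom.id_apply, Pi.smul_apply, smul_eq_mul]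
        exact bB6_smul_right _ r v } with hΦ
  set G : (Fin 3 → ℝ) →ₗ[ℝ] V6 :=
    { toFun := fun c => c 0 • qflip s₁ + c 1 • qflip s₂ + c 2 • qflip L
      map_add' := fun c d => by
        simp only [Pi.add_apply]
        module
      map_smul' := fun r c => by
        simp only [Pi.smul_apply, smul_eq_mul, RingHom.id_apply]
        module } with hG
  have hinj : Function.Injective (Φ.comp G) := by
    rw [← LinearMap.ker_eq_bot, LinearMap.ker_eq_bot']
    intro c hc
    have hc' : ∀ i : Fin 3, bB6 (sv i) (G c) = 0 := fun i => congrFun hc i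
    set m : V6 := c 0 • s₁ + c 1 • s₂ + c 2 • L with hm
    have hGm : G c = qflip m := by
      show c 0 • qflip s₁ + c 1 • qflip s₂ + c 2 • qflip L = qflip m
      rw [hm]; exact qflip_comb _ _ _ _ _ _
    have hmz : bB6 m (G c) = 0 := by
      rw [hm]
      have e1 : bB6 (c 0 • s₁ + c 1 • s₂ + c 2 • L) (G c)
          = c 0 * bB6 s₁ (G c) + c 1 * bB6 s₂ (G c) + c 2 * bB6 L (G c) := by
        simp [bB6, Pi.add_apply, Pi.smul_apply, smul_eq_mul]; ring
      rw [e1]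
      have e2 : bB6 s₁ (G c) = 0 := hc' 0
      have e3 : bB6 s₂ (G c) = 0 := hc' 1
      have e4 : bB6 L (G c) = 0 := hc' 2
      rw [e2, e3, e4]; ring
    rw [hGm, bB6_qflip_self] at hmz
    have hm0 : m = 0 := sum_sq_eq_zero hmz
    have hc2 : c 2 = 0 := by
      have : bB6 L m = c 2 := by
        rw [hm, bB6_add_right, bB6_add_right, bB6_smul_right, bB6_smul_right, bB6_smul_right,
          h1L, h2L, hLL]
        ring
      rw [hm0] at this
      simpa using this.symm
    have h12 : c 0 • s₁ + c 1 • s₂ = 0 := by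
      have := hm0
      rw [hm, hc2] at this
      simpa using this
    obtain ⟨hc0, hc1⟩ := hind _ _ h12
    funext i
    fin_cases i <;> simpa [hc0, hc1, hc2]
  have hsurjG : Function.Surjective (Φ.comp G) := LinearMap.injective_iff_surjective.mp hinj
  have hsurj : Function.Surjective Φ := by
    intro y
    obtain ⟨c, hcy⟩ := hsurjG y
    exact ⟨G c, hcy⟩
  have hrank : Module.finrank ℝ (LinearMap.range Φ) = 3 := by
    rw [LinearMap.range_eq_top.mpr hsurj, finrank_top]
    simp [Module.finrank_fin_fun]
  have hrn := LinearMap.finrank_range_add_finrank_ker Φ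
  rw [hrank] at hrn
  have hV6 : Module.finrank ℝ V6 = 6 := by simp [Module.finrank_fin_fun]
  rw [hV6] at hrn
  refine ⟨LinearMap.ker Φ, by omega, ?_⟩
  intro v hv1 hv2 hv3
  rw [LinearMap.mem_ker]
  funext i
  fin_cases i <;> simpa [hΦ, hsv]

lemma finrank_span_triple (s₁ s₂ d : V6)
    (hind : ∀ a b : ℝ, a • s₁ + b • s₂ = 0 → a = 0 ∧ b = 0)
    (hd : ¬ ∃ a b : ℝ, d = a • s₁ + b • s₂) :
    3 ≤ Module.finrank ℝ (Submodule.span ℝ ({d, s₁, s₂} : Set V6)) := by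
  have hpair : LinearIndependent ℝ ![s₁, s₂] := by
    rw [linearIndependent_fin2]
    constructor
    · intro hz
      have : (0 : ℝ) • s₁ + (1 : ℝ) • s₂ = 0 := by
        simp only [Matrix.cons_val_one, Matrix.head_cons, Matrix.cons_val_zero] at hz
        simp [hz]
      exact one_ne_zero (hind 0 1 this).2
    · intro a ha
      simp only [Matrix.cons_val_one, Matrix.head_cons, Matrix.cons_val_zero] at ha
      have : (1 : ℝ) • s₁ + (-a) • s₂ = 0 := by
        rw [← ha]; module
      exact one_ne_zero (hind 1 (-a) this).1
  have hli : LinearIndependent ℝ ![d, s₁, s₂] := by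
    rw [show (![d, s₁, s₂] : Fin 3 → V6) = Fin.cons d ![s₁, s₂] from rfl,
      linearIndependent_fin_cons]
    refine ⟨hpair, ?_⟩
    intro hmem
    have hrange : Set.range (![s₁, s₂] : Fin 2 → V6) = {s₁, s₂} := by
      ext v
      simp [Matrix.range_cons, Matrix.range_empty]
      tauto
    rw [hrange, Submodule.mem_span_pair] at hmem
    obtain ⟨a, b, hab⟩ := hmem
    exact hd ⟨a, b, hab.symm⟩
  have hcard := finrank_span_eq_card hli
  have hrange3 : Set.range (![d, s₁, s₂] : Fin 3 → V6) = {d, s₁, s₂} := by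
    ext v
    simp [Matrix.range_cons, Matrix.range_empty]
    tauto
  rw [hrange3] at hcard
  rw [hcard]
  simp

/-- if a spacelike section `l` of `C^⊥` is constant in the `u`-direction, then
the `u`-coordinate lines are curvature lines, and for any point sphere complex `𝔭` the point
sphere map lies on a lightlike sphere congruence `ν` constant along the `u`-lines (so the
`u`-curvature lines are spherical). -/
theorem stmt16 (U : Set (ℝ × ℝ)) (σ₁ σ₂ : ℝ × ℝ → V6)
    (h : LegendreSurfaceFrame U σ₁ σ₂)
    (l : ℝ × ℝ → V6) (hls : ContDiffOn ℝ (⊤ : ℕ∞) l U)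
    (hl1 : ∀ x ∈ U, bB6 (l x) (l x) = 1)
    (hlo₁ : ∀ x ∈ U, bB6 (l x) (σ₁ x) = 0)
    (hlo₂ : ∀ x ∈ U, bB6 (l x) (σ₂ x) = 0)
    (hlc : ∀ x ∈ U, pu l x = 0) :
    (∀ x ∈ U, Module.finrank ℝ
      ↥(Submodule.span ℝ ({σ₁ x, σ₂ x, pu σ₁ x, pu σ₂ x} : Set V6)) = 3) ∧
    (∀ P : V6, bB6 P P = -1 →
      ∃ ν : ℝ × ℝ → V6, ContDiffOn ℝ (⊤ : ℕ∞) ν U ∧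
        (∀ x ∈ U, ν x ≠ 0) ∧
        (∀ x ∈ U, bB6 (ν x) (ν x) = 0) ∧
        (∀ x ∈ U, pu ν x = 0) ∧
        (∀ x ∈ U, ν x ∈ Submodule.span ℝ ({l x, P} : Set V6)) ∧
        (∀ x ∈ U, ∀ w : V6, (∃ a b : ℝ, w = a • σ₁ x + b • σ₂ x) →
          bB6 w P = 0 → bB6 (ν x) w = 0)) := by
  have hUo := h.isOpen
  have hdl : ∀ x ∈ U, DifferentiableAt ℝ l x := fun x hx =>
    (hls.contDiffAt (hUo.mem_nhds hx)).differentiableAt (by simp)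
  have hd1 : ∀ x ∈ U, DifferentiableAt ℝ σ₁ x := fun x hx =>
    (h.smooth₁.contDiffAt (hUo.mem_nhds hx)).differentiableAt (by simp)
  have hd2 : ∀ x ∈ U, DifferentiableAt ℝ σ₂ x := fun x hx =>
    (h.smooth₂.contDiffAt (hUo.mem_nhds hx)).differentiableAt (by simp)
  have key : ∀ σ : ℝ × ℝ → V6, (∀ x ∈ U, DifferentiableAt ℝ σ x) →
      (∀ x ∈ U, bB6 (l x) (σ x) = 0) → ∀ x ∈ U, bB6 (l x) (pu σ x) = 0 := by
    intro σ hdσ hlo x hx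
    have h0 : fderiv ℝ (fun y => bB6 (l y) (σ y)) x = 0 :=
      fderiv_zero_of_eqOn hUo hx hlo
    have h1 := fderiv_bB6_pu (hdl x hx) (hdσ x hx)
    rw [h0, hlc x hx] at h1
    simpa using h1.symm
  constructor
  · -- part (i)
    intro x hx
    obtain ⟨K, hK3, hKmem⟩ := finrank_ker_three (σ₁ x) (σ₂ x) (l x)
      (hlo₁ x hx) (hlo₂ x hx) (hl1 x hx) (h.indep x hx)
    have hsub : Submodule.span ℝ ({σ₁ x, σ₂ x, pu σ₁ x, pu σ₂ x} : Set V6) ≤ K := by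
      rw [Submodule.span_le]
      intro v hv
      simp only [Set.mem_insert_iff, Set.mem_singleton_iff] at hv
      have m1 : (σ₁ x) ∈ K := hKmem _ (h.iso₁₁ x hx)
        (by rw [bB6_comm]; exact h.iso₁₂ x hx) (hlo₁ x hx)
      have m2 : (σ₂ x) ∈ K := hKmem _ (h.iso₁₂ x hx) (h.iso₂₂ x hx) (hlo₂ x hx)
      have m3 : (pu σ₁ x) ∈ K := hKmem _
        (by rw [bB6_comm]; exact h.du₁₁ x hx)
        (by rw [bB6_comm]; exact h.du₁₂ x hx)
        (key σ₁ hd1 hlo₁ x hx)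
      have m4 : (pu σ₂ x) ∈ K := hKmem _
        (by rw [bB6_comm]; exact h.du₂₁ x hx)
        (by rw [bB6_comm]; exact h.du₂₂ x hx)
        (key σ₂ hd2 hlo₂ x hx)
      rcases hv with rfl | rfl | rfl | rfl
      · exact m1
      · exact m2
      · exact m3
      · exact m4
    have hub : Module.finrank ℝ
        ↥(Submodule.span ℝ ({σ₁ x, σ₂ x, pu σ₁ x, pu σ₂ x} : Set V6)) ≤ 3 := by
      rw [← hK3]
      exact Submodule.finrank_mono hsub
    have hleg := h.legendre x hx (1, 0) (by simp)
    have hlb : 3 ≤ Module.finrank ℝ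
        ↥(Submodule.span ℝ ({σ₁ x, σ₂ x, pu σ₁ x, pu σ₂ x} : Set V6)) := by
      have hmono : ∀ d : V6, d = pu σ₁ x ∨ d = pu σ₂ x →
          (¬ ∃ a b : ℝ, d = a • σ₁ x + b • σ₂ x) →
          3 ≤ Module.finrank ℝ
            ↥(Submodule.span ℝ ({σ₁ x, σ₂ x, pu σ₁ x, pu σ₂ x} : Set V6)) := by
        intro d hdmem hd
        have h3 := finrank_span_triple (σ₁ x) (σ₂ x) d (h.indep x hx) hd
        refine le_trans h3 (Submodule.finrank_mono (Submodule.span_mono ?_))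
        intro v hv
        simp only [Set.mem_insert_iff, Set.mem_singleton_iff] at hv ⊢
        rcases hv with rfl | rfl | rfl
        · rcases hdmem with rfl | rfl
          · tauto
          · tauto
        · tauto
        · tauto
      by_cases hc1 : ∃ a b : ℝ, fderiv ℝ σ₁ x (1, 0) = a • σ₁ x + b • σ₂ x
      · have hc2 : ¬ ∃ a b : ℝ, fderiv ℝ σ₂ x (1, 0) = a • σ₁ x + b • σ₂ x :=
          fun hc2 => hleg ⟨hc1, hc2⟩
        exact hmono (pu σ₂ x) (Or.inr rfl) hc2
      · exact hmono (pu σ₁ x) (Or.inl rfl) hc1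
    omega
  · -- part (ii)
    intro P hP
    set c : ℝ × ℝ → ℝ := fun y => bB6 (l y) P with hcdef
    have hpos : ∀ y, (0 : ℝ) < c y * c y + 1 := fun y => by nlinarith [mul_self_nonneg (c y)]
    set t : ℝ × ℝ → ℝ := fun y => c y + Real.sqrt (c y * c y + 1) with htdef
    have hsq : ∀ y, Real.sqrt (c y * c y + 1) * Real.sqrt (c y * c y + 1) = c y * c y + 1 :=
      fun y => Real.mul_self_sqrt (le_of_lt (hpos y))
    have hspos : ∀ y, 0 < Real.sqrt (c y * c y + 1) := fun y => Real.sqrt_pos.mpr (hpos y)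
    have hcomp : ∀ i : Fin 6, ContDiffOn ℝ (⊤ : ℕ∞) (fun y => l y i) U := fun i =>
      (ContinuousLinearMap.proj (R := ℝ) (φ := fun _ : Fin 6 => ℝ) i).contDiff.comp_contDiffOn hls
    have hcs : ContDiffOn ℝ (⊤ : ℕ∞) c U := by
      have hce : c = fun y => l y 0 * P 0 + l y 1 * P 1 + l y 2 * P 2 + l y 3 * P 3
          - l y 4 * P 4 - l y 5 * P 5 := rfl
      rw [hce]
      exact (((((((hcomp 0).mul contDiffOn_const).add ((hcomp 1).mul contDiffOn_const)).add
        ((hcomp 2).mul contDiffOn_const)).add ((hcomp 3).mul contDiffOn_const)).sub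
        ((hcomp 4).mul contDiffOn_const)).sub ((hcomp 5).mul contDiffOn_const))
    have hts : ContDiffOn ℝ (⊤ : ℕ∞) t U :=
      hcs.add (((hcs.mul hcs).add contDiffOn_const).sqrt (fun y _ => (hpos y).ne'))
    have hbP : ∀ x, bB6 (l x + t x • P) P = c x - t x := by
      intro x
      rw [bB6_add_left, bB6_smul_left, hP]
      show c x + t x * (-1) = c x - t x
      ring
    refine ⟨fun y => l y + t y • P, ?_, ?_, ?_, ?_, ?_, ?_⟩
    · exact hls.add (hts.smul contDiffOn_const)
    · intro x hx hz
      have h0 : bB6 (l x + t x • P) P = 0 := by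
        simp only at hz
        rw [hz]
        simp
      rw [hbP x] at h0
      have hct : c x - t x = -Real.sqrt (c x * c x + 1) := by
        rw [htdef]
        ring
      rw [hct] at h0
      exact (hspos x).ne' (by linarith)
    · intro x hx
      have expand : bB6 (l x + t x • P) (l x + t x • P)
          = bB6 (l x) (l x) + t x * bB6 (l x) P + t x * bB6 P (l x) + t x * t x * bB6 P P := by
        simp only [bB6, Pi.add_apply, Pi.smul_apply, smul_eq_mul]; ring
      simp only
      rw [expand, hl1 x hx, hP, bB6_comm P (l x)]
      have hcc : bB6 (l x) P = c x := rfl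
      rw [hcc]
      have hs := hsq x
      have hte : t x = c x + Real.sqrt (c x * c x + 1) := rfl
      rw [hte]
      nlinarith [hs]
    · intro x hx
      have hl' : HasFDerivAt l (fderiv ℝ l x) x := (hdl x hx).hasFDerivAt
      have hc' : HasFDerivAt c ((bR P).comp (fderiv ℝ l x)
          + (bR (l x)).comp (0 : (ℝ × ℝ) →L[ℝ] V6)) x :=
        hasFDerivAt_bB6 hl' (hasFDerivAt_const P x)
      have hC0 : ((bR P).comp (fderiv ℝ l x)
          + (bR (l x)).comp (0 : (ℝ × ℝ) →L[ℝ] V6)) (1, 0) = 0 := by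
        simp only [ContinuousLinearMap.add_apply, ContinuousLinearMap.comp_apply,
          ContinuousLinearMap.zero_apply, bR_apply]
        rw [show fderiv ℝ l x (1, 0) = 0 from hlc x hx]
        simp
      obtain ⟨T, hT, hT0⟩ : ∃ T : (ℝ × ℝ) →L[ℝ] ℝ, HasFDerivAt t T x ∧ T (1, 0) = 0 := by
        refine ⟨_, hc'.add ((((hc'.mul hc').add_const 1)).sqrt (hpos x).ne'), ?_⟩
        simp only [ContinuousLinearMap.add_apply, ContinuousLinearMap.smul_apply, hC0,
          smul_eq_mul]
        ring
      have hν := hl'.add (hT.smul (hasFDerivAt_const P x))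
      show pu (fun y => l y + t y • P) x = 0
      rw [pu, show (fun y => l y + t y • P) = (l + t • fun _ => P) from rfl, hν.fderiv]
      simp only [ContinuousLinearMap.add_apply, ContinuousLinearMap.smul_apply,
        ContinuousLinearMap.zero_apply, ContinuousLinearMap.smulRight_apply, hT0]
      rw [show fderiv ℝ l x (1, 0) = 0 from hlc x hx]
      simp
    · intro x hx
      rw [Submodule.mem_span_pair]
      exact ⟨1, t x, by rw [one_smul]⟩
    · rintro x hx w ⟨a, b, rfl⟩ hwP
      have e1 : bB6 (l x + t x • P) (a • σ₁ x + b • σ₂ x)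
          = bB6 (l x) (a • σ₁ x + b • σ₂ x) + t x * bB6 P (a • σ₁ x + b • σ₂ x) := by
        rw [bB6_add_left, bB6_smul_left]
      simp only
      rw [e1, bB6_add_right, bB6_add_right, bB6_smul_right, bB6_smul_right,
        bB6_smul_right, bB6_smul_right, hlo₁ x hx, hlo₂ x hx,
        bB6_comm P (σ₁ x), bB6_comm P (σ₂ x)]
      have hw : a * bB6 (σ₁ x) P + b * bB6 (σ₂ x) P = 0 := by
        rw [bB6_add_left, bB6_smul_left, bB6_smul_left] at hwP
        linarith
      rw [hw]
      ring
end
end
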